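/- Let 1 ≤ q ≤ p < ∞ with 1 < p, and let X be a Banach space with the (p,q)-Dunford–Pettis property. Then X has the p-Dunford–Pettis property, i.e., the (p,p)-Dunford–Pettis property. -/

import Mathlib

open NormedSpace ENNReal

noncomputable section

/-- A sequence `x` in a normed space is weakly `p`-summable if
`∑ₙ |f (x n)|^p < ∞` for every continuous functional `f`. -/
def WeaklySummable (p : ℝ) {X : Type*} [NormedAddCommGroup X] [NormedSpace ℝ X]
    (x : ℕ → X) : Prop :=
  ∀ f : StrongDual ℝ X, Summable fun n => |f (x n)| ^ p

/-- `X` has the `(p, q)`-Dunford–Pettis property if for every weakly `q`-summable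
sequence `x` in `X` and weakly `p`-summable sequence `f` in `X*`,
`∑ₙ (∑ₖ |fₖ (xₙ)|^p)^(q/p) < ∞`. -/
def DPP (p q : ℝ) (X : Type*) [NormedAddCommGroup X] [NormedSpace ℝ X] : Prop :=
  ∀ x : ℕ → X, WeaklySummable q x → ∀ f : ℕ → StrongDual ℝ X, WeaklySummable p f →
    Summable fun n => (∑' k, |f k (x n)| ^ p) ^ (q / p)

/-- `X` has the `p`-Dunford–Pettis property if for every weakly `p`-summable
sequence `x` in `X` and weakly `p`-summable sequence `f` in `X*`,
`∑ₙ ∑ₖ |fₖ (xₙ)|^p < ∞`. -/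
def PDPP (p : ℝ) (X : Type*) [NormedAddCommGroup X] [NormedSpace ℝ X] : Prop :=
  ∀ x : ℕ → X, WeaklySummable p x → ∀ f : ℕ → StrongDual ℝ X, WeaklySummable p f →
    Summable fun n => ∑' k, |f k (x n)| ^ p

/-! Fix `x`, `f` and put `sₙ = ∑ₖ |fₖ (xₙ)|^p`. For every nonnegative `u ∈ ℓ^r` with
`r = p / (p - q)`, Hölder's inequality shows that `uₙ^(1/q) • xₙ` is still weakly `q`-summable,
so the `(p, q)`-property gives `∑ₙ uₙ sₙ^(q/p) < ∞`. By the Landau resonance principle,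
`(sₙ^(q/p))` then lies in the dual space `ℓ^(p/q)`, i.e. `∑ₙ sₙ < ∞`. The resonance principle
rests on the Abel–Dini theorem: if `∑ bₙ` diverges with partial sums `Pₙ`, then `∑ bₙ / Pₙ₊₁`
diverges while `∑ bₙ / Pₙ₊₁^r` converges for every `r > 1`. -/

open Filter Finset Real

theorem sub_div_rpow_le_sub_rpow {c B r : ℝ} (hc : 0 < c) (hcB : c ≤ B) (hr : 1 < r) :
    (r - 1) * ((B - c) / B ^ r) ≤ c ^ (1 - r) - B ^ (1 - r) := by
  have hB : 0 < B := hc.trans_le hcB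
  have hbern : 1 + r * (B / c - 1) ≤ (B / c) ^ r := by
    simpa using one_add_mul_self_le_rpow_one_add (s := B / c - 1)
      (by linarith [div_nonneg hB.le hc.le]) hr.le
  rw [div_rpow hB.le hc.le, le_div_iff₀ (by positivity)] at hbern
  rw [rpow_sub hc, rpow_sub hB, Real.rpow_one, Real.rpow_one]
  have hcr := rpow_pos_of_pos hc r
  have hBr := rpow_pos_of_pos hB r
  rw [div_sub_div _ _ hcr.ne' hBr.ne', mul_div_assoc', div_le_div_iff₀ hBr (by positivity)]
  field_simp at hbern
  nlinarith

theorem summable_sub_div_rpow_of_monotone {P : ℕ → ℝ} (hP0 : 0 < P 0) (hP : Monotone P)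
    {r : ℝ} (hr : 1 < r) : Summable fun n => (P (n + 1) - P n) / P (n + 1) ^ r := by
  have hpos : ∀ n, 0 < P n := fun n => hP0.trans_le (hP n.zero_le)
  refine summable_of_sum_range_le (c := P 0 ^ (1 - r) / (r - 1))
    (fun n => div_nonneg (sub_nonneg.2 (hP n.le_succ)) (rpow_nonneg (hpos _).le _)) fun N => ?_
  rw [le_div_iff₀ (by linarith), mul_comm, mul_sum]
  calc ∑ n ∈ range N, (r - 1) * ((P (n + 1) - P n) / P (n + 1) ^ r)
      ≤ ∑ n ∈ range N, (P n ^ (1 - r) - P (n + 1) ^ (1 - r)) :=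
        sum_le_sum fun n _ => sub_div_rpow_le_sub_rpow (hpos n) (hP n.le_succ) hr
    _ = P 0 ^ (1 - r) - P N ^ (1 - r) := sum_range_sub' _ N
    _ ≤ P 0 ^ (1 - r) := sub_le_self _ (rpow_nonneg (hpos N).le _)

theorem not_summable_sub_div_of_tendsto_atTop {P : ℕ → ℝ} (hP0 : 0 < P 0) (hP : Monotone P)
    (hPtop : Tendsto P atTop atTop) : ¬Summable fun n => (P (n + 1) - P n) / P (n + 1) := by
  have hpos : ∀ n, 0 < P n := fun n => hP0.trans_le (hP n.zero_le)
  set g := fun n => (P (n + 1) - P n) / P (n + 1)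
  have hg : ∀ n, 0 ≤ g n := fun n => div_nonneg (sub_nonneg.2 (hP n.le_succ)) (hpos _).le
  have hblock : ∀ m M, 1 - P m / P (M + m) ≤ ∑ n ∈ range M, g (n + m) := by
    intro m M
    calc 1 - P m / P (M + m) = ∑ n ∈ range M, (P (n + 1 + m) - P (n + m)) / P (M + m) := by
          rw [← sum_div, sum_range_sub (fun n => P (n + m)), one_sub_div (hpos _).ne', zero_add]
      _ ≤ ∑ n ∈ range M, g (n + m) := sum_le_sum fun n hn => by
          rw [add_right_comm]
          exact div_le_div_of_nonneg_left (sub_nonneg.2 (hP (n + m).le_succ)) (hpos _)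
            (hP (by simp at hn; omega))
  intro hsum
  have htail : ∀ m, 1 ≤ ∑' n, g (n + m) := by
    intro m
    have hlim : Tendsto (fun M => 1 - P m / P (M + m)) atTop (nhds 1) := by
      simpa using tendsto_const_nhds.sub (tendsto_const_nhds.div_atTop
        (hPtop.comp (tendsto_add_atTop_nat m)))
    exact le_of_tendsto' hlim fun M => (hblock m M).trans
      (((summable_nat_add_iff m).2 hsum).sum_le_tsum _ fun n _ => hg _)
  have := ge_of_tendsto' (tendsto_sum_nat_add g) htail
  norm_num at this

theorem summable_rpow_of_forall_summable_mul {a : ℕ → ℝ} (ha : ∀ n, 0 ≤ a n) {r r' : ℝ}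
    (hrr : r.HolderConjugate r')
    (h : ∀ u : ℕ → ℝ, (∀ n, 0 ≤ u n) → (Summable fun n => u n ^ r) →
      Summable fun n => a n * u n) :
    Summable fun n => a n ^ r' := by
  by_contra hdiv
  set P : ℕ → ℝ := fun n => 1 + ∑ k ∈ range n, a k ^ r'
  have hP0 : 0 < P 0 := by simp [P]
  have hPsucc : ∀ n, P (n + 1) - P n = a n ^ r' := fun n => by
    simp only [P, sum_range_succ]; ring
  have hP : Monotone P := monotone_nat_of_le_succ fun n => by
    linarith [hPsucc n, rpow_nonneg (ha n) r']
  have hPtop : Tendsto P atTop atTop := tendsto_atTop_add_const_left _ 1 <|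
    (not_summable_iff_tendsto_nat_atTop_of_nonneg fun n => rpow_nonneg (ha n) r').1 hdiv
  -- for `u = a ^ (r' - 1) / P`, `u ^ r` and `a * u` are the two Abel–Dini series of `a ^ r'`
  have hu : ∀ n, 0 ≤ a n ^ (r' - 1) / P (n + 1) := fun n =>
    div_nonneg (rpow_nonneg (ha n) _) (hP0.le.trans (hP (n + 1).zero_le))
  refine not_summable_sub_div_of_tendsto_atTop hP0 hP hPtop ?_
  convert h _ hu ?_ using 2 with n
  · rw [hPsucc, mul_div_assoc', ← rpow_one_add' (ha n) (by linarith [hrr.symm.lt]),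
      add_sub_cancel]
  · convert summable_sub_div_rpow_of_monotone hP0 hP hrr.lt using 2 with n
    rw [hPsucc, div_rpow (rpow_nonneg (ha n) _) (hP0.le.trans (hP (n + 1).zero_le)),
      ← rpow_mul (ha n), hrr.symm.sub_one_mul_conj]

theorem WeaklySummable.smul {X : Type*} [NormedAddCommGroup X] [NormedSpace ℝ X]
    {p q s : ℝ} (hspq : s.HolderTriple p q) {x : ℕ → X} (hx : WeaklySummable p x)
    {c : ℕ → ℝ} (hc : Summable fun n => |c n| ^ s) :
    WeaklySummable q fun n => c n • x n := fun g => by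
  simpa [abs_mul] using
    summable_Lr_of_Lp_Lq_of_nonneg hspq (fun n => abs_nonneg _) (fun n => abs_nonneg _) hc (hx g)

theorem tsum_abs_apply_smul_rpow {X : Type*} [NormedAddCommGroup X] [NormedSpace ℝ X]
    (f : ℕ → StrongDual ℝ X) (c : ℝ) (v : X) {p : ℝ} :
    ∑' k, |f k (c • v)| ^ p = |c| ^ p * ∑' k, |f k v| ^ p := by
  simp only [map_smul, smul_eq_mul, abs_mul, mul_rpow (abs_nonneg _) (abs_nonneg _), tsum_mul_left]

theorem stmt_11_general {X : Type*} [NormedAddCommGroup X] [NormedSpace ℝ X]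
    (p q : ℝ) (hq : 1 ≤ q) (hqp : q ≤ p)
    (h : DPP p q X) : PDPP p X := by
  intro x hx f hf
  rcases hqp.eq_or_lt with rfl | hqp
  · simpa [div_self (by linarith : q ≠ 0)] using h x hx f hf
  have hq0 : 0 < q := by linarith
  have hp0 : 0 < p := by linarith
  have hpq : 0 < p - q := by linarith
  have hrr : (p / (p - q)).HolderConjugate (p / q) :=
    Real.holderConjugate_iff.2 ⟨(one_lt_div hpq).2 (by linarith), by field_simp; ring⟩
  have htriple : (q * (p / (p - q))).HolderTriple p q :=
    ⟨by field_simp; ring, by positivity, by linarith⟩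
  have hs : ∀ n, 0 ≤ ∑' k, |f k (x n)| ^ p := fun n => tsum_nonneg fun k => by positivity
  have key := summable_rpow_of_forall_summable_mul (fun n => rpow_nonneg (hs n) (q / p)) hrr
    fun u hu hur => by
      have hc : Summable fun n => |u n ^ q⁻¹| ^ (q * (p / (p - q))) := by
        simpa [abs_of_nonneg (rpow_nonneg (hu _) _), ← rpow_mul (hu _), hq0.ne'] using hur
      convert h _ (hx.smul htriple hc) f hf using 2 with n
      rw [tsum_abs_apply_smul_rpow, mul_rpow (by positivity) (hs n), ← rpow_mul (abs_nonneg _),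
        abs_of_nonneg (rpow_nonneg (hu n) _), ← rpow_mul (hu n),
        show q⁻¹ * (p * (q / p)) = 1 by field_simp, Real.rpow_one, mul_comm]
  simpa [← rpow_mul (hs _), hq0.ne', hp0.ne'] using key

/-- If `1 ≤ q ≤ p` and `X` has the `(p, q)`-Dunford–Pettis property, then `X` has the
`p`-Dunford–Pettis property. -/
theorem stmt_11 {X : Type*} [NormedAddCommGroup X] [NormedSpace ℝ X] [CompleteSpace X]
    (p q : ℝ) (hq : 1 ≤ q) (hqp : q ≤ p) (hp : 1 < p)
    (h : DPP p q X) : PDPP p X :=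
  stmt_11_general p q hq hqp h
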